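/- Let 𝓑 be the blocks of a q-Steiner system S(t,k,n;q) and let 𝓒_{t+1} be the set of (t+1)-dimensional subspaces of E = F_q^n contained in some block of 𝓑. Then (E, 𝓒_{t+1}) is a t-(n, t+1, λ; q) subspace design with λ = [k−t choose 1]_q = (q^{k−t} − 1)/(q−1). -/

import Mathlib

/-!
The block `B` through a `t`-subspace `T` is unique, so the `(t+1)`-subspaces of blocks that
contain `T` are exactly those lying between `T` and `B`. These are the points of the projective
space of `B / T`, a space of dimension `k - t`, of which there are `(q^(k-t) - 1) / (q - 1)`.
-/

/-- 𝓑 is a q-Steiner system S(t,k,n;q) on E = K^n. -/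
def IsSteinerSystem {K : Type*} [Field K] [Fintype K] {n : ℕ}
    (t k : ℕ) (𝓑 : Set (Submodule K (Fin n → K))) : Prop :=
  1 ≤ t ∧ t ≤ k ∧ k ≤ n ∧
  (∀ B ∈ 𝓑, Module.finrank K B = k) ∧
  (∀ T : Submodule K (Fin n → K), Module.finrank K T = t → ∃! B, B ∈ 𝓑 ∧ T ≤ B)

open Module

namespace Submodule

variable {K V : Type*} [Field K] [AddCommGroup V] [Module K V] [FiniteDimensional K V]

theorem finrank_comap_mkQ (T : Submodule K V) (D : Submodule K (V ⧸ T)) :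
    finrank K (D.comap T.mkQ) = finrank K D + finrank K T := by
  have hle : T ≤ D.comap T.mkQ := le_comap_mkQ T D
  have := (T.mkQ.domRestrict (D.comap T.mkQ)).finrank_range_add_finrank_ker
  rw [LinearMap.range_domRestrict, map_comap_eq_of_surjective T.mkQ_surjective,
    LinearMap.ker_domRestrict, ker_mkQ, (comapSubtypeEquivOfLe hle).finrank_eq] at this
  exact this.symm

noncomputable def finrankSuccBetweenEquivProjectivization (T B : Submodule K V) (hTB : T ≤ B) :
    {C : Submodule K V // T ≤ C ∧ finrank K C = finrank K T + 1 ∧ C ≤ B} ≃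
      Projectivization K (B.map T.mkQ) :=
  calc {C : Submodule K V // T ≤ C ∧ finrank K C = finrank K T + 1 ∧ C ≤ B}
      ≃ {C : Set.Ici T // finrank K C.1 = finrank K T + 1 ∧ C ≤ ⟨B, hTB⟩} :=
        (Equiv.subtypeSubtypeEquivSubtypeInter _ _).symm
    _ ≃ {D : Submodule K (V ⧸ T) // D ≤ B.map T.mkQ ∧ finrank K D = 1} :=
        ((comapMkQRelIso T).toEquiv.subtypeEquiv fun D => by
          change _ ↔ finrank K (D.comap T.mkQ) = _ ∧ comapMkQRelIso T D ≤ ⟨B, hTB⟩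
          rw [finrank_comap_mkQ, ← OrderIso.le_symm_apply, and_comm]
          exact and_congr_left' (by omega)).symm
    _ ≃ {D : {D : Submodule K (V ⧸ T) // D ≤ B.map T.mkQ} // finrank K D.1 = 1} :=
        (Equiv.subtypeSubtypeEquivSubtypeInter _ _).symm
    _ ≃ {D : Submodule K (B.map T.mkQ) // finrank K D = 1} :=
        ((MapSubtype.orderIso _).toEquiv.subtypeEquiv fun D => by
          rw [← finrank_map_subtype_eq]; rfl).symm
    _ ≃ Projectivization K (B.map T.mkQ) := (Projectivization.equivSubmodule K _).symm

theorem card_finrank_succ_between_mul (T B : Submodule K V) (hTB : T ≤ B) :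
    Nat.card {C : Submodule K V // T ≤ C ∧ finrank K C = finrank K T + 1 ∧ C ≤ B} *
        (Nat.card K - 1) = Nat.card K ^ (finrank K B - finrank K T) - 1 := by
  have hW : finrank K (B.map T.mkQ) = finrank K B - finrank K T := by
    have := finrank_comap_mkQ T (B.map T.mkQ)
    rw [comap_map_mkQ, sup_eq_right.mpr hTB] at this
    omega
  rw [Nat.card_congr (finrankSuccBetweenEquivProjectivization T B hTB), ← Projectivization.card,
    natCard_eq_pow_finrank (K := K), hW]

end Submodule

theorem stmt14 {K : Type*} [Field K] [Fintype K] {q n t k : ℕ}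
    (hq : Fintype.card K = q)
    (𝓑 : Set (Submodule K (Fin n → K))) (h𝓑 : IsSteinerSystem t k 𝓑) :
    let 𝓒 : Set (Submodule K (Fin n → K)) :=
      {C | Module.finrank K C = t + 1 ∧ ∃ B ∈ 𝓑, C ≤ B}
    ∀ T : Submodule K (Fin n → K), Module.finrank K T = t →
      (Nat.card {C : Submodule K (Fin n → K) // C ∈ 𝓒 ∧ T ≤ C} : ℤ) * (q - 1) =
        (q : ℤ) ^ (k - t) - 1 := by
  intro 𝓒 T hT
  obtain ⟨B, ⟨hB𝓑, hTB⟩, hB_unique⟩ := h𝓑.2.2.2.2 T hT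
  have hBk : finrank K B = k := h𝓑.2.2.2.1 B hB𝓑
  have h𝓒 : ∀ C, C ∈ 𝓒 ∧ T ≤ C ↔ T ≤ C ∧ finrank K C = finrank K T + 1 ∧ C ≤ B := by
    intro C
    refine ⟨fun ⟨⟨hC, B', hB', hCB'⟩, hTC⟩ => ?_,
      fun ⟨hTC, hC, hCB⟩ => ⟨⟨hT ▸ hC, B, hB𝓑, hCB⟩, hTC⟩⟩
    obtain rfl := hB_unique B' ⟨hB', hTC.trans hCB'⟩
    exact ⟨hTC, hT ▸ hC, hCB'⟩
  have hcount := Submodule.card_finrank_succ_between_mul T B hTB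
  rw [← Nat.card_congr (Equiv.subtypeEquivRight h𝓒), hT, hBk,
    Nat.card_eq_fintype_card (α := K), hq] at hcount
  have hq_pos : 1 ≤ q := hq ▸ Fintype.card_pos
  have := congrArg (Nat.cast : ℕ → ℤ) hcount
  push_cast [Nat.cast_sub hq_pos, Nat.cast_sub (Nat.one_le_pow _ _ hq_pos)] at this
  exact this
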